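/- For κ > 1 and ϖ > 0, if γ_ni = γ_r/((κ−1)γ_r + 1) where γ_r is a nonnegative random variable, then E[log(1 + ϖ·γ_ni)] ≤ log(1 + ϖ/(κ−1)); i.e., the achievable rate under hardware impairments is bounded by a finite capacity ceiling independent of the SNR distribution. -/

import Mathlib

/-! Hardware impairments cap the effective SNDR: `γ / ((κ - 1) γ + 1) < 1 / (κ - 1)` for every
`γ ≥ 0`, so the integrand is bounded pointwise by the ceiling `log (1 + ϖ / (κ - 1))`, which is
nonnegative; integrating against a probability measure preserves such a bound. -/

open MeasureTheory

/-- Unlike `integral_mono`, no integrability is needed: a non-integrable `f` has integral `0 ≤ C`. -/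
theorem integral_le_of_ae_le_of_nonneg {Ω : Type*} [MeasurableSpace Ω] {μ : Measure Ω}
    [IsProbabilityMeasure μ] {f : Ω → ℝ} {C : ℝ} (hC : 0 ≤ C) (hf : ∀ᵐ ω ∂μ, f ω ≤ C) :
    ∫ ω, f ω ∂μ ≤ C := by
  by_cases hint : Integrable f μ
  · simpa using integral_mono_ae hint (integrable_const C) hf
  · rwa [integral_undef hint]

theorem div_mul_add_one_lt_inv {a x : ℝ} (ha : 0 < a) (hx : 0 ≤ x) : x / (a * x + 1) < a⁻¹ := by
  rw [div_lt_iff₀ (by positivity), inv_mul_eq_div, lt_div_iff₀ ha]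
  linarith

theorem log_one_add_mul_div_mul_add_one_le {a x ϖ : ℝ} (ha : 0 < a) (hx : 0 ≤ x) (hϖ : 0 ≤ ϖ) :
    Real.log (1 + ϖ * (x / (a * x + 1))) ≤ Real.log (1 + ϖ / a) := by
  have hsndr : x / (a * x + 1) < a⁻¹ := div_mul_add_one_lt_inv ha hx
  apply Real.log_le_log (by positivity)
  rw [div_eq_mul_inv ϖ a]
  gcongr

theorem stmt5_general {Ω : Type*} [MeasurableSpace Ω] (μ : Measure Ω) [IsProbabilityMeasure μ]
    (γr : Ω → ℝ) (hnn : ∀ ω, 0 ≤ γr ω)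
    (κ ϖ : ℝ) (hκ : 1 < κ) (hϖ : 0 < ϖ) :
    ∫ ω, Real.log (1 + ϖ * (γr ω / ((κ - 1) * γr ω + 1))) ∂μ ≤
      Real.log (1 + ϖ / (κ - 1)) := by
  have hκ' : 0 < κ - 1 := sub_pos.mpr hκ
  refine integral_le_of_ae_le_of_nonneg (Real.log_nonneg ?_) (.of_forall fun ω ↦
    log_one_add_mul_div_mul_add_one_le hκ' (hnn ω) hϖ.le)
  exact le_add_of_nonneg_right (by positivity)

/-- Capacity ceiling under hardware impairments: with γ_ni = γ_r/((κ−1)γ_r + 1),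
E[log(1 + ϖ·γ_ni)] ≤ log(1 + ϖ/(κ−1)) for any nonnegative random variable γ_r. -/
theorem stmt5 {Ω : Type*} [MeasurableSpace Ω] (μ : Measure Ω) [IsProbabilityMeasure μ]
    (γr : Ω → ℝ) (hmeas : Measurable γr) (hnn : ∀ ω, 0 ≤ γr ω)
    (κ ϖ : ℝ) (hκ : 1 < κ) (hϖ : 0 < ϖ) :
    ∫ ω, Real.log (1 + ϖ * (γr ω / ((κ - 1) * γr ω + 1))) ∂μ ≤
      Real.log (1 + ϖ / (κ - 1)) :=
  stmt5_general μ γr hnn κ ϖ hκ hϖ
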